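/- Suppose every hyperedge e with m(e) ≠ 0 has cardinality |e| ≤ 2. Then for each vertex k ∈ Fin N, the operator P_k = ω^{−m({k})} · X_k ∘ ∏_{n ≠ k} Z_n^{−m({k,n})} (exponents being integer lifts of elements of ZMod d, with negative powers denoting inverses) fixes the state: P_k |H(m)⟩ = |H(m)⟩. Hence |H(m)⟩ is a common eigenvector with eigenvalue 1 of N elements of the generalized Pauli group, i.e., of operators of the form (scalar power of ω) times a product of single-qudit X and Z powers. -/

import Mathlib

open Finset

noncomputable section

/-- The primitive `d`-th root of unity `ω = exp(2πi/d)`. -/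
def omega (d : ℕ) : ℂ := Complex.exp (2 * Real.pi * Complex.I / d)

/-- The `N`-qudit Hilbert space, modeled as functions from points to amplitudes. -/
abbrev QV (d N : ℕ) := (Fin N → Fin d) → ℂ

/-- Diagonal operator with diagonal phase function `φ`. -/
def diagOp (d N : ℕ) (φ : (Fin N → Fin d) → ℂ) : Module.End ℂ (QV d N) where
  toFun ψ := fun i => φ i * ψ i
  map_add' ψ ψ' := by funext i; simp [mul_add]
  map_smul' c ψ := by funext i; simp [smul_eq_mul]; ring

lemma diag_comm (d N : ℕ) (φ φ' : (Fin N → Fin d) → ℂ) :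
    Commute (diagOp d N φ) (diagOp d N φ') := by
  apply LinearMap.ext; intro ψ; funext i
  simp [diagOp, Module.End.mul_apply]; ring

/-- The hyperedge operator `C_e`. -/
def Ce (d N : ℕ) (e : Finset (Fin N)) : Module.End ℂ (QV d N) :=
  diagOp d N fun i => omega d ^ ∏ k ∈ e, (i k : ℕ)

/-- The inverse of the hyperedge operator `C_e`. -/
def CeInv (d N : ℕ) (e : Finset (Fin N)) : Module.End ℂ (QV d N) :=
  diagOp d N fun i => (omega d ^ ∏ k ∈ e, (i k : ℕ))⁻¹

/-- The qudit hypergraph state `|H(m)⟩` for a multiplicity function `m`. -/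
def Hstate (d N : ℕ) (m : Finset (Fin N) → ZMod d) : QV d N :=
  fun i => (d : ℂ) ^ (-(N : ℂ)/2) *
    omega d ^ (∑ e : Finset (Fin N), m e * ∏ k ∈ e, ((i k : ℕ) : ZMod d)).val

/-- The generalized Pauli `X` operator on vertex `k`. -/
def Xop (d N : ℕ) [NeZero d] (k : Fin N) : Module.End ℂ (QV d N) where
  toFun ψ := fun i => ψ (Function.update i k (i k + 1))
  map_add' ψ ψ' := by funext i; simp
  map_smul' c ψ := by funext i; simp

/-- The inverse of the generalized Pauli `Z` operator on vertex `k`. -/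
def ZopInv (d N : ℕ) (k : Fin N) : Module.End ℂ (QV d N) :=
  diagOp d N fun i => (omega d ^ (i k : ℕ))⁻¹

/-- The Pauli-group operator
`P_k = ω^{-m({k})} · X_k ∘ ∏_{n ≠ k} Z_n^{-m({k,n})}` (exponents are the canonical
integer lifts of values in `ZMod d`, negative powers denoting inverses). -/
def Pk (d N : ℕ) [NeZero d] (m : Finset (Fin N) → ZMod d) (k : Fin N) :
    Module.End ℂ (QV d N) :=
  (omega d ^ (m {k}).val)⁻¹ •
    (Xop d N k *
      Finset.noncommProd (Finset.univ.filter fun n : Fin N => n ≠ k)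
        (fun n => ZopInv d N n ^ (m {k, n}).val)
        (fun _ _ _ _ _ => (diag_comm d N _ _).pow_pow _ _))

/-! Shifting coordinate `k` by one changes the phase `∑ₑ m(e) ∏_{l ∈ e} iₗ` of `|H(m)⟩` by the
discrete derivative `∑_{e ∋ k} m(e) ∏_{l ∈ e \ {k}} iₗ`. When every weighted edge has at most two
vertices this is the affine function `m{k} + ∑_{n ≠ k} m{k,n} iₙ`, which is exactly the phase removed
by the diagonal part `ω^{-m{k}} ∏_{n ≠ k} Z_n^{-m{k,n}}` of `P_k` (it does not involve `iₖ`, so it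
commutes past `X_k`). Powers `ω ^ x.val` are handled as `ZMod.stdAddChar x`, so that all exponent
arithmetic takes place in `ZMod d`. -/

open Function ZMod

def hyperPhase {ι R : Type*} [Fintype ι] [CommSemiring R] (m : Finset ι → R) (f : ι → R) : R :=
  ∑ e, m e * ∏ l ∈ e, f l

section HyperPhase

variable {ι R : Type*} [DecidableEq ι] [CommSemiring R]

lemma prod_update_add_one (e : Finset ι) (f : ι → R) (k : ι) :
    ∏ l ∈ e, update f k (f k + 1) l =
      ∏ l ∈ e, f l + if k ∈ e then ∏ l ∈ e.erase k, f l else 0 := by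
  split_ifs with hk
  · rw [prod_update_of_mem hk, ← mul_prod_erase e f hk, sdiff_singleton_eq_erase]
    ring
  · rw [prod_update_of_notMem hk, add_zero]

lemma exists_eq_pair_of_mem_of_card_le_two {e : Finset ι} {k : ι} (hk : k ∈ e)
    (he : e.card ≤ 2) : ∃ n, e = {k, n} := by
  have : Nonempty ι := ⟨k⟩
  have : (e.erase k).card ≤ 1 := by rw [card_erase_of_mem hk]; omega
  obtain ⟨n, hn⟩ := card_le_one_iff_subset_singleton.mp this
  rcases subset_singleton_iff.mp hn with h | h
  · exact ⟨k, by rw [← insert_erase hk, h]; simp⟩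
  · exact ⟨n, by rw [← insert_erase hk, h]⟩

lemma pair_right_injective (k : ι) : Injective (fun n : ι => ({k, n} : Finset ι)) := by
  intro x y (h : ({k, x} : Finset ι) = {k, y})
  have hy : y ∈ ({k, x} : Finset ι) := h ▸ mem_insert_of_mem (mem_singleton_self y)
  have hx : x ∈ ({k, y} : Finset ι) := h.symm ▸ mem_insert_of_mem (mem_singleton_self x)
  grind

variable [Fintype ι]

lemma hyperPhase_update_add_one (m : Finset ι → R) (f : ι → R) (k : ι) :
    hyperPhase m (update f k (f k + 1)) =
      hyperPhase m f + ∑ e ∈ univ.filter (k ∈ ·), m e * ∏ l ∈ e.erase k, f l := by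
  simp only [hyperPhase, prod_update_add_one, mul_add, sum_add_distrib, mul_ite, mul_zero,
    sum_filter]

lemma sum_filter_mem_erase_of_card_le_two {m : Finset ι → R}
    (hcard : ∀ e, m e ≠ 0 → e.card ≤ 2) (f : ι → R) (k : ι) :
    ∑ e ∈ univ.filter (k ∈ ·), m e * ∏ l ∈ e.erase k, f l =
      m {k} + ∑ n ∈ univ.filter (· ≠ k), m {k, n} * f n := by
  set g : Finset ι → R := fun e => m e * ∏ l ∈ e.erase k, f l
  have hsub : univ.image (fun n => ({k, n} : Finset ι)) ⊆ univ.filter (k ∈ ·) := by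
    intro e he
    obtain ⟨n, -, rfl⟩ := mem_image.mp he
    simp
  have hzero : ∀ e ∈ univ.filter (k ∈ ·), e ∉ univ.image (fun n => ({k, n} : Finset ι)) →
      g e = 0 := by
    intro e hk he
    by_contra hg
    obtain ⟨n, rfl⟩ := exists_eq_pair_of_mem_of_card_le_two (mem_filter.mp hk).2
      (hcard e (left_ne_zero_of_mul hg))
    exact he (mem_image_of_mem _ (mem_univ n))
  have hpair : ∀ n ∈ univ.erase k, g {k, n} = m {k, n} * f n := by
    intro n hn
    simp only [g]
    rw [erase_insert (notMem_singleton.mpr (ne_of_mem_erase hn).symm), prod_singleton]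
  calc ∑ e ∈ univ.filter (k ∈ ·), g e
      = ∑ n, g {k, n} := by
        rw [← sum_subset hsub hzero, sum_image fun x _ y _ h => pair_right_injective k h]
    _ = m {k} + ∑ n ∈ univ.filter (· ≠ k), m {k, n} * f n := by
        rw [← add_sum_erase _ _ (mem_univ k), filter_ne', sum_congr rfl hpair]
        simp [g]

end HyperPhase

lemma AddChar.map_sum_eq_prod {ι A M : Type*} [AddCommMonoid A] [CommMonoid M]
    (ψ : AddChar A M) (s : Finset ι) (f : ι → A) : ψ (∑ i ∈ s, f i) = ∏ i ∈ s, ψ (f i) := by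
  induction s using Finset.cons_induction with
  | empty => simp
  | cons a s ha ih => rw [sum_cons, prod_cons, map_add_eq_mul, ih]

section Operators

variable {d N : ℕ}

lemma diagOp_eq_lmul (φ : QV d N) : diagOp d N φ = Algebra.lmul ℂ (QV d N) φ := by
  ext ψ i
  simp [diagOp]

lemma diagOp_pow (φ : QV d N) (p : ℕ) : diagOp d N φ ^ p = diagOp d N (φ ^ p) := by
  simp only [diagOp_eq_lmul, map_pow]

lemma noncommProd_diagOp {ι : Type*} (s : Finset ι) (φ : ι → QV d N) (comm) :
    s.noncommProd (fun n => diagOp d N (φ n)) comm = diagOp d N (∏ n ∈ s, φ n) := by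
  calc s.noncommProd (fun n => diagOp d N (φ n)) comm
      = s.noncommProd (fun n => Algebra.lmul ℂ (QV d N) (φ n))
          (fun _ _ _ _ _ => (Commute.all _ _).map _) :=
        noncommProd_congr rfl (fun n _ => diagOp_eq_lmul _) _
    _ = diagOp d N (∏ n ∈ s, φ n) := by
        rw [← map_noncommProd _ _ fun _ _ _ _ _ => Commute.all _ _, noncommProd_eq_prod,
          diagOp_eq_lmul]

variable [NeZero d]

lemma omega_pow_eq_stdAddChar (a : ℕ) : omega d ^ a = stdAddChar (a : ZMod d) := by
  rw [stdAddChar_apply, toCircle_natCast, omega, ← Complex.exp_nat_mul]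
  ring_nf

lemma omega_pow_val (x : ZMod d) : omega d ^ x.val = stdAddChar x := by
  rw [omega_pow_eq_stdAddChar, natCast_zmod_val]

lemma stdAddChar_ne_zero (x : ZMod d) : stdAddChar x ≠ 0 :=
  Circle.coe_ne_zero _

lemma natCast_val_add_one (a : Fin d) :
    (((a + 1 : Fin d) : ℕ) : ZMod d) = ((a : ℕ) : ZMod d) + 1 := by
  rw [Fin.val_add, natCast_mod, Nat.cast_add, Fin.val_one', natCast_mod, Nat.cast_one]

lemma Pk_apply (m : Finset (Fin N) → ZMod d) (k : Fin N) (ψ : QV d N) (i : Fin N → Fin d) :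
    Pk d N m k ψ i = (stdAddChar (m {k}))⁻¹ *
      (stdAddChar (∑ n ∈ univ.filter (· ≠ k), m {k, n} * ((i n : ℕ) : ZMod d)))⁻¹ *
        ψ (update i k (i k + 1)) := by
  have hZ : (univ.filter fun n : Fin N => n ≠ k).noncommProd
      (fun n => ZopInv d N n ^ (m {k, n}).val) (fun _ _ _ _ _ => (diag_comm d N _ _).pow_pow _ _)
      = diagOp d N (∏ n ∈ univ.filter (· ≠ k),
          (fun i : Fin N → Fin d => (omega d ^ (i n : ℕ))⁻¹) ^ (m {k, n}).val) := by
    rw [← noncommProd_diagOp]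
    exact noncommProd_congr rfl (fun n _ => by rw [ZopInv, diagOp_pow]) _
  have hterm : ∀ n ∈ univ.filter (· ≠ k),
      ((omega d ^ (update i k (i k + 1) n : ℕ))⁻¹) ^ (m {k, n}).val =
        (stdAddChar (m {k, n} * ((i n : ℕ) : ZMod d)))⁻¹ := by
    intro n hn
    rw [update_of_ne (mem_filter.mp hn).2, inv_pow, omega_pow_eq_stdAddChar,
      ← AddChar.map_nsmul_eq_pow, nsmul_eq_mul, natCast_zmod_val]
  rw [Pk, hZ]
  simp only [LinearMap.smul_apply, Module.End.mul_apply, Xop, diagOp, LinearMap.coe_mk,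
    AddHom.coe_mk, Pi.smul_apply, smul_eq_mul]
  rw [Finset.prod_apply]
  simp only [Pi.pow_apply]
  rw [omega_pow_val, prod_congr rfl hterm, prod_inv_distrib, ← AddChar.map_sum_eq_prod]
  ring

lemma Hstate_apply (m : Finset (Fin N) → ZMod d) (i : Fin N → Fin d) :
    Hstate d N m i =
      (d : ℂ) ^ (-(N : ℂ) / 2) * stdAddChar (hyperPhase m fun l => ((i l : ℕ) : ZMod d)) := by
  rw [Hstate, omega_pow_val, hyperPhase]

lemma Hstate_update_add_one {m : Finset (Fin N) → ZMod d} (hcard : ∀ e, m e ≠ 0 → e.card ≤ 2)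
    (k : Fin N) (i : Fin N → Fin d) :
    Hstate d N m (update i k (i k + 1)) = stdAddChar (m {k}) *
      stdAddChar (∑ n ∈ univ.filter (· ≠ k), m {k, n} * ((i n : ℕ) : ZMod d)) *
        Hstate d N m i := by
  have hcoord : (fun l => ((update i k (i k + 1) l : ℕ) : ZMod d)) =
      update (fun l => ((i l : ℕ) : ZMod d)) k (((i k : ℕ) : ZMod d) + 1) := by
    funext l
    rcases eq_or_ne l k with rfl | hl
    · simp [natCast_val_add_one]
    · simp [update_of_ne hl]
  rw [Hstate_apply, Hstate_apply, hcoord, hyperPhase_update_add_one,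
    sum_filter_mem_erase_of_card_le_two hcard, AddChar.map_add_eq_mul, AddChar.map_add_eq_mul]
  ring

end Operators

theorem Pauli_stabilizer_of_card_le_two_general (d N : ℕ) [NeZero d]
    (m : Finset (Fin N) → ZMod d)
    (hcard : ∀ e : Finset (Fin N), m e ≠ 0 → e.card ≤ 2) (k : Fin N) :
    Pk d N m k (Hstate d N m) = Hstate d N m := by
  funext i
  rw [Pk_apply, Hstate_update_add_one hcard]
  field_simp [stdAddChar_ne_zero]

/-- If every hyperedge of nonzero multiplicity has cardinality at
most 2, then for each vertex `k` the generalized-Pauli-group element `P_k` fixes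
`|H(m)⟩`; hence `|H(m)⟩` is a common eigenvector with eigenvalue 1 of `N` elements
of the generalized Pauli group. -/
theorem Pauli_stabilizer_of_card_le_two (d N : ℕ) [NeZero d] (hd : 2 ≤ d) (hN : 1 ≤ N)
    (m : Finset (Fin N) → ZMod d)
    (hcard : ∀ e : Finset (Fin N), m e ≠ 0 → e.card ≤ 2) (k : Fin N) :
    Pk d N m k (Hstate d N m) = Hstate d N m :=
  Pauli_stabilizer_of_card_le_two_general d N m hcard k

end
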